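/- For any s > 1/2 and any y ∈ ℝ, the L² norm in x of the function x ↦ e^{-|x-y|} ⟨x⟩^{-s} is bounded by C ⟨y⟩^{-s}, where C depends only on s and ⟨x⟩ = (1+x²)^{1/2}. -/

import Mathlib

open MeasureTheory
open Real
open scoped ENNReal NNReal

-- Peetre
lemma peetre (x y : ℝ) : Real.sqrt (1 + y^2) ≤ Real.sqrt 2 * (Real.sqrt (1 + x^2) * Real.sqrt (1 + (x-y)^2)) := by
  rw [← Real.sqrt_mul (by positivity : (0:ℝ) ≤ 1 + x^2), ← Real.sqrt_mul (by norm_num : (0:ℝ) ≤ 2)]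
  apply Real.sqrt_le_sqrt
  nlinarith [sq_nonneg (x + (x - y)), sq_nonneg (x*(x-y)), sq_nonneg (x - y), sq_nonneg x]

-- exp lower bound
lemma lemB (s : ℝ) (hs : 0 < s) (t : ℝ) :
    Real.sqrt (1 + t^2) ^ s ≤ ((1 + 2*(⌈s⌉₊:ℝ)) ^ (⌈s⌉₊:ℕ)) * Real.exp (|t|/2) := by
  set n : ℕ := ⌈s⌉₊ with hn
  have hn1 : 1 ≤ n := Nat.one_le_ceil_iff.mpr hs
  have hb : (1:ℝ) ≤ Real.sqrt (1 + t^2) := by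
    rw [show (1:ℝ) + t^2 = 1 + t*t by ring]
    nlinarith [Real.sq_sqrt (by nlinarith [sq_nonneg t] : (0:ℝ) ≤ 1 + t*t), Real.sqrt_nonneg (1+t*t)]
  have h1 : Real.sqrt (1 + t^2) ^ s ≤ Real.sqrt (1 + t^2) ^ (n:ℝ) :=
    Real.rpow_le_rpow_of_exponent_le hb (Nat.le_ceil s)
  rw [Real.rpow_natCast] at h1
  have h2 : Real.sqrt (1 + t^2) ≤ 1 + |t| := by
    rw [show (1:ℝ) + |t| = Real.sqrt ((1+|t|)^2) by rw [Real.sqrt_sq (by positivity)]]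
    apply Real.sqrt_le_sqrt
    nlinarith [abs_nonneg t, sq_abs t]
  have h3 : 1 + |t| ≤ (1 + 2*(n:ℝ)) * Real.exp (|t|/(2*n)) := by
    have he1 : (1:ℝ) ≤ Real.exp (|t|/(2*n)) := Real.one_le_exp (by positivity)
    have he2 : |t|/(2*n) ≤ Real.exp (|t|/(2*n)) := (Real.add_one_le_exp _).trans' (by linarith [abs_nonneg t])
    have hnp : (0:ℝ) < (n:ℝ) := by exact_mod_cast hn1
    have : |t| ≤ 2*(n:ℝ) * Real.exp (|t|/(2*n)) := by
      rw [div_le_iff₀ (by positivity)] at he2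
      linarith [he2]
    nlinarith
  refine h1.trans ?_
  calc Real.sqrt (1 + t^2) ^ n ≤ ((1 + 2*(n:ℝ)) * Real.exp (|t|/(2*n))) ^ n := by
        apply pow_le_pow_left₀ (by positivity) (h2.trans h3)
    _ = (1 + 2*(n:ℝ))^n * Real.exp (|t|/(2*n)) ^ n := mul_pow _ _ _
    _ = (1 + 2*(n:ℝ))^n * Real.exp (|t|/2) := by
        rw [← Real.exp_nat_mul]
        congr 1
        have hnp : ((n:ℝ)) ≠ 0 := by positivity
        field_simp

lemma pointwise_bd (s : ℝ) (hs : 0 < s) (x y : ℝ) :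
    Real.exp (-|x - y|) * Real.sqrt (1 + x^2) ^ (-s) ≤
      (Real.sqrt 2 ^ s * ((1 + 2*(⌈s⌉₊:ℝ)) ^ (⌈s⌉₊:ℕ)) * Real.sqrt (1 + y^2) ^ (-s)) *
        Real.exp (-(|x - y|/2)) := by
  set K : ℝ := (1 + 2*(⌈s⌉₊:ℝ)) ^ (⌈s⌉₊:ℕ) with hK
  have hKpos : 0 < K := by positivity
  have hA : (0:ℝ) < Real.sqrt (1 + x^2) := Real.sqrt_pos.mpr (by positivity)
  have hB : (0:ℝ) < Real.sqrt (1 + y^2) := Real.sqrt_pos.mpr (by positivity)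
  have hT : (0:ℝ) < Real.sqrt (1 + (x-y)^2) := Real.sqrt_pos.mpr (by positivity)
  have hAs : (0:ℝ) < Real.sqrt (1 + x^2) ^ s := Real.rpow_pos_of_pos hA _
  have hBs : (0:ℝ) < Real.sqrt (1 + y^2) ^ s := Real.rpow_pos_of_pos hB _
  -- B^s ≤ √2^s * A^s * T^s
  have h1 : Real.sqrt (1 + y^2) ^ s ≤
      Real.sqrt 2 ^ s * (Real.sqrt (1 + x^2) ^ s * Real.sqrt (1 + (x-y)^2) ^ s) := by
    rw [← Real.mul_rpow hA.le hT.le, ← Real.mul_rpow (by positivity) (by positivity)]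
    exact Real.rpow_le_rpow (Real.sqrt_nonneg _) (peetre x y) hs.le
  have h2 : Real.sqrt (1 + (x-y)^2) ^ s ≤ K * Real.exp (|x-y|/2) := lemB s hs (x-y)
  have h3 : Real.sqrt (1 + y^2) ^ s ≤
      Real.sqrt 2 ^ s * K * Real.exp (|x-y|/2) * Real.sqrt (1 + x^2) ^ s := by
    calc Real.sqrt (1 + y^2) ^ s
        ≤ Real.sqrt 2 ^ s * (Real.sqrt (1 + x^2) ^ s * Real.sqrt (1 + (x-y)^2) ^ s) := h1
      _ ≤ Real.sqrt 2 ^ s * (Real.sqrt (1 + x^2) ^ s * (K * Real.exp (|x-y|/2))) := by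
          have h2s : (0:ℝ) ≤ Real.sqrt 2 ^ s := (Real.rpow_pos_of_pos (by positivity) s).le
          exact mul_le_mul_of_nonneg_left (mul_le_mul_of_nonneg_left h2 hAs.le) h2s
      _ = Real.sqrt 2 ^ s * K * Real.exp (|x-y|/2) * Real.sqrt (1 + x^2) ^ s := by ring
  -- invert
  have h4 : (Real.sqrt (1 + x^2) ^ s)⁻¹ ≤
      Real.sqrt 2 ^ s * K * Real.exp (|x-y|/2) * (Real.sqrt (1 + y^2) ^ s)⁻¹ := by
    rw [inv_eq_one_div, inv_eq_one_div, mul_one_div, div_le_div_iff₀ hAs hBs, one_mul]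
    linarith [h3]
  rw [Real.rpow_neg hA.le, Real.rpow_neg hB.le]
  have hexp : (0:ℝ) < Real.exp (-|x-y|) := Real.exp_pos _
  calc Real.exp (-|x - y|) * (Real.sqrt (1 + x^2) ^ s)⁻¹
      ≤ Real.exp (-|x - y|) * (Real.sqrt 2 ^ s * K * Real.exp (|x-y|/2) * (Real.sqrt (1 + y^2) ^ s)⁻¹) :=
        mul_le_mul_of_nonneg_left h4 hexp.le
    _ = (Real.sqrt 2 ^ s * K * (Real.sqrt (1 + y^2) ^ s)⁻¹) * (Real.exp (-|x-y|) * Real.exp (|x-y|/2)) := by ring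
    _ = (Real.sqrt 2 ^ s * K * (Real.sqrt (1 + y^2) ^ s)⁻¹) * Real.exp (-(|x-y|/2)) := by
        rw [← Real.exp_add]; ring_nf

lemma integrable_exp_neg_abs : Integrable (fun x : ℝ => Real.exp (-|x|)) := by
  have h1 : IntegrableOn (fun x : ℝ => Real.exp (-|x|)) (Set.Iic 0) := by
    apply (integrableOn_exp_Iic 0).congr_fun (fun x hx => ?_) measurableSet_Iic
    rw [abs_of_nonpos hx, neg_neg]
  have h2 : IntegrableOn (fun x : ℝ => Real.exp (-|x|)) (Set.Ioi 0) := by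
    apply ((exp_neg_integrableOn_Ioi 0 one_pos).congr_fun (fun x hx => ?_) measurableSet_Ioi)
    rw [abs_of_pos hx]; ring_nf
  have := h1.union h2
  rwa [Set.Iic_union_Ioi, integrableOn_univ] at this

lemma integral_exp_neg_abs : ∫ x : ℝ, Real.exp (-|x|) = 2 := by
  have h := integral_comp_abs (f := fun t => Real.exp (-t))
  rw [integral_exp_neg_Ioi_zero] at h
  simpa using h

lemma elp_exp_half (y : ℝ) :
    eLpNorm (fun x : ℝ => Real.exp (-(|x - y|/2))) 2 volume ≤ ENNReal.ofReal 2 := by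
  rw [eLpNorm_eq_lintegral_rpow_enorm_toReal two_ne_zero ENNReal.ofNat_ne_top]
  have hpt : ∀ x : ℝ, ‖Real.exp (-(|x - y|/2))‖ₑ ^ (2:ℝ≥0∞).toReal
      = ENNReal.ofReal (Real.exp (-|x - y|)) := by
    intro x
    rw [ENNReal.toReal_ofNat, ← ofReal_norm, Real.norm_of_nonneg (Real.exp_pos _).le,
      ENNReal.ofReal_rpow_of_pos (Real.exp_pos _)]
    congr 1
    rw [← Real.exp_one_rpow (-(|x-y|/2)), ← Real.rpow_mul (by positivity), Real.exp_one_rpow]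
    norm_num
  simp_rw [hpt]
  have hint : Integrable (fun x : ℝ => Real.exp (-|x - y|)) :=
    integrable_exp_neg_abs.comp_sub_right y
  rw [← MeasureTheory.ofReal_integral_eq_lintegral_ofReal hint
    (Filter.Eventually.of_forall fun x => (Real.exp_pos _).le)]
  have : ∫ x : ℝ, Real.exp (-|x - y|) = 2 := by
    rw [show (fun x : ℝ => Real.exp (-|x - y|)) = (fun x : ℝ => Real.exp (-|x|)) ∘ (fun x => x - y) from rfl]
    rw [Function.comp_def, integral_sub_right_eq_self (fun x : ℝ => Real.exp (-|x|)) y]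
    exact integral_exp_neg_abs
  rw [this]
  calc ENNReal.ofReal 2 ^ (1 / (2:ℝ≥0∞).toReal) ≤ ENNReal.ofReal 2 ^ (1:ℝ) := by
        apply ENNReal.rpow_le_rpow_of_exponent_le (by norm_num [ENNReal.one_le_ofReal])
        rw [ENNReal.toReal_ofNat]; norm_num
    _ = ENNReal.ofReal 2 := ENNReal.rpow_one _

theorem stmt_0 (s : ℝ) (hs : 1/2 < s) :
    ∃ C > 0, ∀ y : ℝ,
      eLpNorm (fun x : ℝ => Real.exp (-|x - y|) * (Real.sqrt (1 + x^2)) ^ (-s)) 2 volume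
        ≤ ENNReal.ofReal (C * (Real.sqrt (1 + y^2)) ^ (-s)) := by
  have hs0 : 0 < s := by linarith
  set K : ℝ := (1 + 2*(⌈s⌉₊:ℝ)) ^ (⌈s⌉₊:ℕ) with hKdef
  refine ⟨2 * (Real.sqrt 2 ^ s * K), by positivity, fun y => ?_⟩
  set D : ℝ := Real.sqrt 2 ^ s * K * Real.sqrt (1 + y^2) ^ (-s) with hDdef
  have hD : 0 ≤ D := by
    have : (0:ℝ) ≤ Real.sqrt (1 + y^2) ^ (-s) := Real.rpow_nonneg (Real.sqrt_nonneg _) _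
    positivity
  calc eLpNorm (fun x : ℝ => Real.exp (-|x - y|) * (Real.sqrt (1 + x^2)) ^ (-s)) 2 volume
      ≤ eLpNorm (D • fun x : ℝ => Real.exp (-(|x - y|/2))) 2 volume := by
        apply eLpNorm_mono_real
        intro x
        rw [Real.norm_of_nonneg (by positivity)]
        exact pointwise_bd s hs0 x y
    _ ≤ ‖D‖₊ • eLpNorm (fun x : ℝ => Real.exp (-(|x - y|/2))) 2 volume :=
        eLpNorm_const_smul_le
    _ = ENNReal.ofReal D * eLpNorm (fun x : ℝ => Real.exp (-(|x - y|/2))) 2 volume := by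
        rw [ENNReal.smul_def, smul_eq_mul, ← enorm_eq_nnnorm, ← ofReal_norm,
          Real.norm_of_nonneg hD]
    _ ≤ ENNReal.ofReal D * ENNReal.ofReal 2 := mul_le_mul_right (elp_exp_half y) _
    _ = ENNReal.ofReal (2 * (Real.sqrt 2 ^ s * K) * Real.sqrt (1 + y^2) ^ (-s)) := by
        rw [← ENNReal.ofReal_mul hD]
        congr 1
        rw [hDdef]; ring
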